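/- arXiv:1710.05488 — 2 statements merged into one kernel-verified Lean document; each statement's English description precedes it below -/
import Mathlib

section
/- Let h : ℝⁿ → ℝ be strictly convex and differentiable, let c(x,y) = h(x−y), and let φ be a Kantorovich potential with φ^c(y₀) = c(x₀,y₀) − φ(x₀) for some x₀ in the interior of the domain where φ is differentiable. Then ∇φ(x₀) = ∇h(x₀ − y₀), and hence y₀ = x₀ − (∇h)⁻¹(∇φ(x₀)). -/
/-! The first-order condition at the minimiser `x₀` of `x ↦ h (x - y₀) - φ x` gives
`∇φ x₀ = ∇h (x₀ - y₀)`. Strict convexity makes `∇h` strictly monotone,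
`0 < ⟪∇h y - ∇h x, y - x⟫` for `x ≠ y` (restrict `h` to the segment `[x, y]`), so `∇h` is
injective, which identifies `x₀ - y₀` as the unique preimage of `∇φ x₀`. -/

open scoped RealInnerProductSpace

open Function Set

theorem StrictConvexOn.comp_affineMap_of_injective {𝕜 E F β : Type*} [Ring 𝕜]
    [PartialOrder 𝕜] [AddCommGroup E] [AddCommGroup F] [AddCommMonoid β] [PartialOrder β]
    [Module 𝕜 E] [Module 𝕜 F] [SMul 𝕜 β] {f : F → β} (g : E →ᵃ[𝕜] F) (hg : Injective g)
    {s : Set F} (hf : StrictConvexOn 𝕜 s f) : StrictConvexOn 𝕜 (g ⁻¹' s) (f ∘ g) :=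
  ⟨hf.1.affine_preimage _, fun x hx y hy hxy a b ha hb hab =>
    calc
      (f ∘ g) (a • x + b • y) = f (a • g x + b • g y) := by
        rw [comp_apply, Convex.combo_affine_apply hab]
      _ < a • f (g x) + b • f (g y) := hf.2 hx hy (hg.ne hxy) ha hb hab⟩

theorem IsLocalMin.hasGradientAt_eq_zero {E : Type*} [NormedAddCommGroup E]
    [InnerProductSpace ℝ E] [CompleteSpace E] {f : E → ℝ} {f' a : E}
    (h : IsLocalMin f a) (hf : HasGradientAt f f' a) : f' = 0 := by
  simpa using h.hasFDerivAt_eq_zero hf.hasFDerivAt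

section

variable {E : Type*} [NormedAddCommGroup E] [InnerProductSpace ℝ E] [CompleteSpace E]
  {f : E → ℝ} {s : Set E}

theorem StrictConvexOn.inner_sub_sub_pos_of_hasGradientAt (hf : StrictConvexOn ℝ s f)
    {x y f'x f'y : E} (hx : x ∈ s) (hy : y ∈ s) (hxy : x ≠ y)
    (hfx : HasGradientAt f f'x x) (hfy : HasGradientAt f f'y y) :
    0 < ⟪f'y - f'x, y - x⟫ := by
  set ℓ : ℝ →ᵃ[ℝ] E := AffineMap.lineMap x y
  have hℓ : StrictConvexOn ℝ (ℓ ⁻¹' s) (f ∘ ℓ) :=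
    hf.comp_affineMap_of_injective ℓ (AffineMap.lineMap_injective ℝ hxy)
  have hderiv {t : ℝ} {f' : E} (ht : HasGradientAt f f' (ℓ t)) :
      HasDerivAt (f ∘ ℓ) ⟪f', y - x⟫ t := by
    simpa using ht.hasFDerivAt.comp_hasDerivAt t AffineMap.hasDerivAt_lineMap
  have h₀ : (0 : ℝ) ∈ ℓ ⁻¹' s := by simpa [ℓ] using hx
  have h₁ : (1 : ℝ) ∈ ℓ ⁻¹' s := by simpa [ℓ] using hy
  have hslopes : ⟪f'x, y - x⟫ < ⟪f'y, y - x⟫ :=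
    (hℓ.lt_slope_of_hasDerivAt h₀ h₁ one_pos (hderiv (by simpa [ℓ] using hfx))).trans
      (hℓ.slope_lt_of_hasDerivAt h₀ h₁ one_pos (hderiv (by simpa [ℓ] using hfy)))
  rwa [inner_sub_left, sub_pos]

theorem StrictConvexOn.injective_gradient (hf : StrictConvexOn ℝ univ f)
    (hd : Differentiable ℝ f) : Injective (gradient f) := by
  intro x y hxy
  by_contra hne
  have hpos := hf.inner_sub_sub_pos_of_hasGradientAt (mem_univ x) (mem_univ y) hne
    (hd x).hasGradientAt (hd y).hasGradientAt
  rw [hxy, sub_self, inner_zero_left] at hpos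
  exact lt_irrefl 0 hpos

end

/-- For cost `c(x,y) = h(x-y)` with `h` strictly convex and differentiable, if the
infimum defining the c-transform `φ^c(y₀) = inf_x (c(x,y₀) - φ(x))` is attained at
`x₀`, where `φ` is differentiable, then `∇φ(x₀) = ∇h(x₀ - y₀)`; hence, `∇h` being
injective, `y₀ = x₀ - (∇h)⁻¹(∇φ(x₀))`. -/
theorem kantorovich_potential_gradient_relation
    (n : ℕ) (h φ : EuclideanSpace ℝ (Fin n) → ℝ)
    (hconv : StrictConvexOn ℝ Set.univ h)
    (hdiff : Differentiable ℝ h)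
    (x₀ y₀ : EuclideanSpace ℝ (Fin n))
    (hφdiff : DifferentiableAt ℝ φ x₀)
    (hmin : ∀ x : EuclideanSpace ℝ (Fin n),
      h (x₀ - y₀) - φ x₀ ≤ h (x - y₀) - φ x) :
    gradient φ x₀ = gradient h (x₀ - y₀) ∧
      ∀ z : EuclideanSpace ℝ (Fin n), gradient h z = gradient φ x₀ → y₀ = x₀ - z := by
  have hcost : HasGradientAt (fun x => h (x - y₀)) (gradient h (x₀ - y₀)) x₀ := by
    have := (hdiff (x₀ - y₀)).hasGradientAt.hasFDerivAt.comp x₀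
      ((hasFDerivAt_id x₀).sub_const y₀)
    rwa [ContinuousLinearMap.comp_id] at this
  have hcrit : HasGradientAt (fun x => h (x - y₀) - φ x)
      (gradient h (x₀ - y₀) - gradient φ x₀) x₀ := by
    rw [hasGradientAt_iff_hasFDerivAt, map_sub]
    exact hcost.hasFDerivAt.sub hφdiff.hasGradientAt.hasFDerivAt
  have hloc : IsLocalMin (fun x => h (x - y₀) - φ x) x₀ := Filter.Eventually.of_forall hmin
  have hgrad : gradient φ x₀ = gradient h (x₀ - y₀) :=
    (sub_eq_zero.mp (hloc.hasGradientAt_eq_zero hcrit)).symm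
  refine ⟨hgrad, fun z hz => ?_⟩
  rw [hconv.injective_gradient hdiff (hz.trans hgrad), sub_sub_cancel]
end

section
/- Suppose the volume functions w_i(h) = μ(W_i(h) ∩ Ω) are C¹ on the open set H = {h : w_i(h) > 0 ∀i}. Then the mixed partials satisfy the symmetry ∂w_i/∂h_j = ∂w_j/∂h_i for i ≠ j, so the 1-form ∑_i w_i dh_i is closed on H and admits a potential A(h) with ∂A/∂h_i = w_i(h). -/
open scoped RealInnerProductSpace
open MeasureTheory

/-!
The cell measures are the gradient of the potential `A(h) = ∫_Ω (u_h - u_0) dμ`. Off the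
hyperplanes where two affine pieces `⟪x, y_i⟫ + h_i` tie (a `μ`-null set, since `μ ≪ volume` and
the `y_i` are distinct), `h ↦ u_h(x)` is locally the single piece of the cell containing `x`, so its
derivative is the corresponding coordinate functional; since `h ↦ u_h(x)` is also `1`-Lipschitz,
differentiating under the integral gives `∇A(h) = (μ(W_i(h) ∩ Ω))_i`. Where the `w_i` are
differentiable, their partials are second partials of `A`, hence symmetric. The same null-set
argument makes each `w_i` continuous, so `H` is open.
-/

open Filter Topology

section Envelope

variable {X ι : Type*} {f : ι → X → ℝ} {h h' : ι → ℝ} {x : X} {i j : ι}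

noncomputable def upperEnvelope [Fintype ι] [Nonempty ι] (f : ι → X → ℝ) (h : ι → ℝ) (x : X) : ℝ :=
  Finset.univ.sup' Finset.univ_nonempty fun i => f i x + h i

def envelopeCell (f : ι → X → ℝ) (h : ι → ℝ) (i : ι) : Set X :=
  {x | ∀ j, f j x + h j ≤ f i x + h i}

def strictEnvelopeCell (f : ι → X → ℝ) (h : ι → ℝ) (i : ι) : Set X :=
  {x | ∀ j ≠ i, f j x + h j < f i x + h i}

lemma le_upperEnvelope [Fintype ι] [Nonempty ι] (f : ι → X → ℝ) (h : ι → ℝ) (x : X) (i : ι) :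
    f i x + h i ≤ upperEnvelope f h x :=
  Finset.le_sup' (fun i => f i x + h i) (Finset.mem_univ i)

lemma upperEnvelope_eq_of_mem_envelopeCell [Fintype ι] [Nonempty ι] (hx : x ∈ envelopeCell f h i) :
    upperEnvelope f h x = f i x + h i :=
  le_antisymm (Finset.sup'_le _ _ fun j _ => hx j) (le_upperEnvelope f h x i)

lemma upperEnvelope_le_add_of_forall_le [Fintype ι] [Nonempty ι] {c : ℝ}
    (hc : ∀ i, h i ≤ h' i + c) :
    upperEnvelope f h x ≤ upperEnvelope f h' x + c :=
  Finset.sup'_le _ _ fun i _ => by linarith [hc i, le_upperEnvelope f h' x i]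

lemma abs_upperEnvelope_sub_le [Fintype ι] [Nonempty ι] {c : ℝ} (hc : ∀ i, |h i - h' i| ≤ c) :
    |upperEnvelope f h x - upperEnvelope f h' x| ≤ c := by
  have hle : ∀ i, h i ≤ h' i + c ∧ h' i ≤ h i + c := fun i => by
    have := abs_le.1 (hc i)
    constructor <;> linarith
  rw [abs_sub_le_iff]
  constructor
  · linarith [upperEnvelope_le_add_of_forall_le (f := f) (x := x) fun i => (hle i).1]
  · linarith [upperEnvelope_le_add_of_forall_le (f := f) (x := x) fun i => (hle i).2]

lemma strictEnvelopeCell_subset : strictEnvelopeCell f h i ⊆ envelopeCell f h i := by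
  intro x hx j
  rcases eq_or_ne j i with rfl | hj
  · exact le_rfl
  · exact (hx j hj).le

lemma mem_envelopeCell_iff_of_mem_strictEnvelopeCell (hx : x ∈ strictEnvelopeCell f h i) :
    x ∈ envelopeCell f h j ↔ j = i := by
  refine ⟨fun hj => by_contra fun hji => (hj i).not_gt (hx j hji), ?_⟩
  rintro rfl
  exact strictEnvelopeCell_subset hx

lemma exists_mem_strictEnvelopeCell [Fintype ι] [Nonempty ι]
    (hx : ∀ i j, i ≠ j → f i x + h i ≠ f j x + h j) : ∃ i, x ∈ strictEnvelopeCell f h i := by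
  obtain ⟨i, -, hi⟩ :=
    Finset.exists_max_image Finset.univ (fun j => f j x + h j) Finset.univ_nonempty
  exact ⟨i, fun j hj => (hi j (Finset.mem_univ j)).lt_of_ne (hx j i hj)⟩

lemma eventually_mem_strictEnvelopeCell [Finite ι] (hx : x ∈ strictEnvelopeCell f h i) :
    ∀ᶠ h' in 𝓝 h, x ∈ strictEnvelopeCell f h' i := by
  refine eventually_all.2 fun j => ?_
  by_cases hj : j = i
  · exact Eventually.of_forall fun _ hji => absurd hj hji
  · have hopen : IsOpen {h' : ι → ℝ | f j x + h' j < f i x + h' i} :=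
      isOpen_lt (continuous_const.add (continuous_apply j))
        (continuous_const.add (continuous_apply i))
    filter_upwards [hopen.mem_nhds (hx j hj)] with h' hh' _ using hh'

end Envelope

section Measure

variable {X ι : Type*} [Fintype ι] [MeasurableSpace X] {f : ι → X → ℝ} {ν : Measure X}

lemma measurableSet_envelopeCell (hf : ∀ i, Measurable (f i)) (h : ι → ℝ) (i : ι) :
    MeasurableSet (envelopeCell f h i) := by
  simp only [envelopeCell, Set.ofPred_forall]
  exact MeasurableSet.iInter fun j => measurableSet_le ((hf j).add_const _) ((hf i).add_const _)

lemma measurable_upperEnvelope [Nonempty ι] (hf : ∀ i, Measurable (f i)) (h : ι → ℝ) :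
    Measurable (upperEnvelope f h) := by
  convert Finset.measurable_sup' Finset.univ_nonempty fun i _ => (hf i).add_const (h i) using 1
  ext x
  simp [upperEnvelope, Finset.sup'_apply]

lemma ae_exists_mem_strictEnvelopeCell [Nonempty ι]
    (hties : ∀ i j, i ≠ j → ∀ c, ν {x | f i x - f j x = c} = 0) (h : ι → ℝ) :
    ∀ᵐ x ∂ν, ∃ i, x ∈ strictEnvelopeCell f h i := by
  have hne : ∀ᵐ x ∂ν, ∀ i j, i ≠ j → f i x + h i ≠ f j x + h j := by
    refine ae_all_iff.2 fun i => ae_all_iff.2 fun j => ?_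
    by_cases hij : i = j
    · exact Eventually.of_forall fun _ hij' => absurd hij hij'
    · filter_upwards [measure_eq_zero_iff_ae_notMem.1 (hties i j hij (h j - h i))] with x hx _ hxij
      exact hx (show f i x - f j x = h j - h i by linarith)
  filter_upwards [hne] with x hx using exists_mem_strictEnvelopeCell hx

theorem continuous_measureReal_envelopeCell [Nonempty ι] [IsFiniteMeasure ν]
    (hf : ∀ i, Measurable (f i)) (hties : ∀ i j, i ≠ j → ∀ c, ν {x | f i x - f j x = c} = 0)
    (i : ι) : Continuous fun h : ι → ℝ => ν.real (envelopeCell f h i) := by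
  classical
  refine continuous_iff_continuousAt.2 fun h₀ => ?_
  simp only [← integral_indicator_one (measurableSet_envelopeCell hf _ i)]
  refine continuousAt_of_dominated (bound := 1)
    (Eventually.of_forall fun h =>
      (measurable_one.indicator (measurableSet_envelopeCell hf h i)).aestronglyMeasurable)
    (Eventually.of_forall fun h => ae_of_all _ fun x => ?_) (integrable_const 1) ?_
  · rw [Set.indicator_apply]
    split_ifs <;> simp
  filter_upwards [ae_exists_mem_strictEnvelopeCell hties h₀] with x ⟨j, hj⟩
  refine (continuousAt_const (y := if i = j then (1 : ℝ) else 0)).congr ?_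
  filter_upwards [eventually_mem_strictEnvelopeCell hj] with h hh
  simp only [Set.indicator_apply, mem_envelopeCell_iff_of_mem_strictEnvelopeCell hh, Pi.one_apply]

end Measure

lemma toDual_toLp_eq_sum_smul_proj {ι : Type*} [Fintype ι] (v : ι → ℝ) :
    InnerProductSpace.toDual ℝ (EuclideanSpace ℝ ι) (WithLp.toLp 2 v) =
      ∑ i, v i • EuclideanSpace.proj (𝕜 := ℝ) i := by
  ext t
  simp [PiLp.inner_apply, mul_comm]

theorem fderiv_apply_single_comm_of_hasGradientAt {ι : Type*} [Fintype ι] [DecidableEq ι]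
    {A : EuclideanSpace ℝ ι → ℝ} {g : ι → EuclideanSpace ℝ ι → ℝ}
    (hA : ∀ h, HasGradientAt A (WithLp.toLp 2 fun i => g i h) h) {h₀ : EuclideanSpace ℝ ι}
    (hg : ∀ i, DifferentiableAt ℝ (g i) h₀) (i j : ι) :
    fderiv ℝ (g i) h₀ (EuclideanSpace.single j 1) =
      fderiv ℝ (g j) h₀ (EuclideanSpace.single i 1) := by
  have hfderiv : ∀ h, HasFDerivAt A (∑ i, g i h • EuclideanSpace.proj (𝕜 := ℝ) i) h := fun h => by
    simpa only [hasGradientAt_iff_hasFDerivAt, toDual_toLp_eq_sum_smul_proj] using hA h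
  have hsecond : HasFDerivAt (fun h => ∑ i, g i h • EuclideanSpace.proj (𝕜 := ℝ) i)
      (∑ i, (fderiv ℝ (g i) h₀).smulRight (EuclideanSpace.proj (𝕜 := ℝ) i)) h₀ :=
    HasFDerivAt.fun_sum fun i _ => (hg i).hasFDerivAt.smul_const (EuclideanSpace.proj (𝕜 := ℝ) i)
  simpa [PiLp.single_apply] using second_derivative_symmetric hfderiv hsecond
    (EuclideanSpace.single j 1) (EuclideanSpace.single i 1)

section Potential

variable {X ι : Type*} [Fintype ι] [Nonempty ι] {f : ι → X → ℝ} {x : X} {i : ι}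

lemma abs_upperEnvelope_sub_le_norm (h h' : EuclideanSpace ℝ ι) :
    |upperEnvelope f h x - upperEnvelope f h' x| ≤ ‖h - h'‖ :=
  abs_upperEnvelope_sub_le fun i => PiLp.norm_apply_le (h - h') i

lemma hasFDerivAt_upperEnvelope {h₀ : EuclideanSpace ℝ ι} (hx : x ∈ strictEnvelopeCell f h₀ i) :
    HasFDerivAt (fun h : EuclideanSpace ℝ ι => upperEnvelope f h x)
      (EuclideanSpace.proj (𝕜 := ℝ) i) h₀ := by
  have hloc : ∀ᶠ h : EuclideanSpace ℝ ι in 𝓝 h₀, x ∈ strictEnvelopeCell f h i :=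
    (PiLp.continuous_ofLp 2 _).continuousAt.eventually (eventually_mem_strictEnvelopeCell hx)
  refine ((EuclideanSpace.proj (𝕜 := ℝ) i).hasFDerivAt.const_add (f i x)).congr_of_eventuallyEq ?_
  filter_upwards [hloc] with h hh
  exact upperEnvelope_eq_of_mem_envelopeCell (strictEnvelopeCell_subset hh)

variable [MeasurableSpace X]

/-- Subtracting `u_0` keeps the integrand bounded by `‖h‖`, so no moment condition on `ν` is
needed. -/
noncomputable def envelopePotential (ν : Measure X) (f : ι → X → ℝ) (h : EuclideanSpace ℝ ι) : ℝ :=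
  ∫ x, upperEnvelope f h x - upperEnvelope f 0 x ∂ν

theorem hasGradientAt_envelopePotential {ν : Measure X} [IsFiniteMeasure ν]
    (hf : ∀ i, Measurable (f i)) (hties : ∀ i j, i ≠ j → ∀ c, ν {x | f i x - f j x = c} = 0)
    (h₀ : EuclideanSpace ℝ ι) :
    HasGradientAt (envelopePotential ν f)
      (WithLp.toLp 2 fun i => ν.real (envelopeCell f h₀ i)) h₀ := by
  classical
  set F : EuclideanSpace ℝ ι → X → ℝ := fun h x => upperEnvelope f h x - upperEnvelope f 0 x
  set F' : X → StrongDual ℝ (EuclideanSpace ℝ ι) := fun x =>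
    ∑ i, (envelopeCell f h₀ i).indicator (fun _ => EuclideanSpace.proj i) x
  have hcell := measurableSet_envelopeCell hf h₀
  have hF'_int (i : ι) :
      Integrable ((envelopeCell f h₀ i).indicator fun _ => EuclideanSpace.proj (𝕜 := ℝ) i) ν :=
    (integrable_const (EuclideanSpace.proj (𝕜 := ℝ) i)).indicator (hcell i)
  have hmeas (h : EuclideanSpace ℝ ι) : AEStronglyMeasurable (F h) ν :=
    ((measurable_upperEnvelope hf h).sub (measurable_upperEnvelope hf 0)).aestronglyMeasurable
  have hlip (x : X) : LipschitzWith 1 (F · x) :=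
    LipschitzWith.of_dist_le_mul fun h h' => by
      simpa [F, Real.dist_eq, dist_eq_norm] using
        abs_upperEnvelope_sub_le_norm (f := f) (x := x) h h'
  have hint : Integrable (F h₀) ν :=
    Integrable.of_bound (hmeas h₀) ‖h₀‖ (ae_of_all _ fun x => by
      simpa using abs_upperEnvelope_sub_le_norm (f := f) (x := x) h₀ 0)
  have hdiff : ∀ᵐ x ∂ν, HasFDerivAt (F · x) (F' x) h₀ := by
    filter_upwards [ae_exists_mem_strictEnvelopeCell hties h₀] with x ⟨i, hi⟩
    have hF' : F' x = EuclideanSpace.proj i := by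
      simp [F', Set.indicator_apply, mem_envelopeCell_iff_of_mem_strictEnvelopeCell hi]
    rw [hF']
    exact (hasFDerivAt_upperEnvelope hi).sub_const _
  obtain ⟨-, hA⟩ := hasFDerivAt_integral_of_dominated_loc_of_lip (bound := fun _ => 1)
    Filter.univ_mem (Eventually.of_forall hmeas) hint
    (Finset.aestronglyMeasurable_fun_sum _ fun i _ => (hF'_int i).aestronglyMeasurable)
    (ae_of_all _ fun x => by simpa using (hlip x).lipschitzOnWith (s := Set.univ))
    (integrable_const 1) hdiff
  have hF'_integral :
      ∫ x, F' x ∂ν = ∑ i, ν.real (envelopeCell f h₀ i) • EuclideanSpace.proj i := by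
    rw [integral_finsetSum _ fun i _ => hF'_int i]
    exact Finset.sum_congr rfl fun i _ => integral_indicator_const _ (hcell i)
  rw [hasGradientAt_iff_hasFDerivAt, toDual_toLp_eq_sum_smul_proj, ← hF'_integral]
  exact hA

end Potential

theorem addHaar_preimage_singleton_linearMap {E : Type*} [NormedAddCommGroup E]
    [NormedSpace ℝ E] [MeasurableSpace E] [BorelSpace E] [FiniteDimensional ℝ E]
    (μ : Measure E) [μ.IsAddHaarMeasure] {L : E →ₗ[ℝ] ℝ} (hL : L ≠ 0) (c : ℝ) :
    μ (L ⁻¹' {c}) = 0 := by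
  convert Measure.addHaar_affineSubspace μ ((affineSpan ℝ {c}).comap L.toAffineMap) ?_
  · simp [AffineSubspace.coe_comap, AffineSubspace.coe_affineSpan_singleton]
  · intro htop
    have hmem : ∀ x, L x = c := fun x => by
      simpa using (htop ▸ AffineSubspace.mem_top ℝ E x :
        x ∈ (affineSpan ℝ {c}).comap L.toAffineMap)
    have hc : c = 0 := by simpa using (hmem 0).symm
    exact hL (LinearMap.ext fun x => (hmem x).trans hc)

theorem measure_inner_sub_inner_eq_null {E : Type*} [NormedAddCommGroup E]
    [InnerProductSpace ℝ E] [FiniteDimensional ℝ E] [MeasurableSpace E] [BorelSpace E]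
    {μ ν : Measure E} [μ.IsAddHaarMeasure] (hν : ν ≪ μ) {a b : E} (hab : a ≠ b) (c : ℝ) :
    ν {x | ⟪x, a⟫ - ⟪x, b⟫ = c} = 0 := by
  have hL : innerₛₗ ℝ (a - b) ≠ 0 := fun hL =>
    hab (sub_eq_zero.1 (inner_self_eq_zero.1 (LinearMap.congr_fun hL (a - b))))
  refine hν ?_
  convert addHaar_preimage_singleton_linearMap μ hL c using 2
  ext x
  simp [real_inner_comm]

theorem cell_measure_mixed_partials_symmetric_general
    (n k : ℕ) (hk : 0 < k)
    (y : Fin k → EuclideanSpace ℝ (Fin n)) (hy : Function.Injective y)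
    (Ω : Set (EuclideanSpace ℝ (Fin n)))
    (μ : Measure (EuclideanSpace ℝ (Fin n))) [IsProbabilityMeasure μ]
    (hac : μ ≪ volume)
    (w : Fin k → EuclideanSpace ℝ (Fin k) → ℝ)
    (hw : ∀ (i : Fin k) (h : EuclideanSpace ℝ (Fin k)),
      w i h = (μ ({x : EuclideanSpace ℝ (Fin n) |
        ∀ j : Fin k, ⟪x, y j⟫ + h j ≤ ⟪x, y i⟫ + h i} ∩ Ω)).toReal)
    (H : Set (EuclideanSpace ℝ (Fin k)))
    (hH : H = {h : EuclideanSpace ℝ (Fin k) | ∀ i : Fin k, 0 < w i h})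
    (hC1 : ∀ i : Fin k, ContDiffOn ℝ 1 (w i) H) :
    (∀ h ∈ H, ∀ i j : Fin k, i ≠ j →
        fderiv ℝ (w i) h (EuclideanSpace.single j (1 : ℝ)) =
          fderiv ℝ (w j) h (EuclideanSpace.single i (1 : ℝ))) ∧
      ∃ A : EuclideanSpace ℝ (Fin k) → ℝ, ∀ h ∈ H,
        HasGradientAt A (WithLp.toLp 2 (fun i => w i h) : EuclideanSpace ℝ (Fin k)) h := by
  have : Nonempty (Fin k) := ⟨⟨0, hk⟩⟩
  set ν := μ.restrict Ω
  set f : Fin k → EuclideanSpace ℝ (Fin n) → ℝ := fun i x => ⟪x, y i⟫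
  have hf : ∀ i, Measurable (f i) := fun i => measurable_id.inner measurable_const
  have hties : ∀ i j, i ≠ j → ∀ c, ν {x | f i x - f j x = c} = 0 := fun i j hij =>
    measure_inner_sub_inner_eq_null
      ((Measure.absolutelyContinuous_of_le Measure.restrict_le_self).trans hac) (hy.ne hij)
  obtain rfl : w = fun i (h : EuclideanSpace ℝ (Fin k)) => ν.real (envelopeCell f h i) :=
    funext₂ fun i h => by
      rw [hw, measureReal_restrict_apply (measurableSet_envelopeCell hf _ i)]
      rfl
  have hgrad := hasGradientAt_envelopePotential hf hties
  have hH_open : IsOpen H := by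
    rw [hH, Set.ofPred_forall]
    exact isOpen_iInter_of_finite fun i => isOpen_lt continuous_const
      ((continuous_measureReal_envelopeCell hf hties i).comp (PiLp.continuous_ofLp 2 _))
  refine ⟨fun h hh i j _ => fderiv_apply_single_comm_of_hasGradientAt hgrad
    (fun i => ((hC1 i).differentiableOn one_ne_zero).differentiableAt (hH_open.mem_nhds hh)) i j,
    _, fun h _ => hgrad h⟩

/-- If the cell measures `w_i(h) = μ(W_i(h) ∩ Ω)` are `C¹` on the open set
`H = {h : w_i(h) > 0 ∀i}`, then the mixed partials are symmetric,
`∂w_i/∂h_j = ∂w_j/∂h_i`, so the 1-form `∑ w_i dh_i` is closed on `H` and admits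
a potential `A` with `∇A(h) = w(h)`. -/
theorem cell_measure_mixed_partials_symmetric
    (n k : ℕ) (hk : 0 < k)
    (y : Fin k → EuclideanSpace ℝ (Fin n)) (hy : Function.Injective y)
    (Ω : Set (EuclideanSpace ℝ (Fin n))) (hΩc : IsCompact Ω) (hΩconv : Convex ℝ Ω)
    (μ : Measure (EuclideanSpace ℝ (Fin n))) [IsProbabilityMeasure μ]
    (hac : μ ≪ volume)
    (w : Fin k → EuclideanSpace ℝ (Fin k) → ℝ)
    (hw : ∀ (i : Fin k) (h : EuclideanSpace ℝ (Fin k)),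
      w i h = (μ ({x : EuclideanSpace ℝ (Fin n) |
        ∀ j : Fin k, ⟪x, y j⟫ + h j ≤ ⟪x, y i⟫ + h i} ∩ Ω)).toReal)
    (H : Set (EuclideanSpace ℝ (Fin k)))
    (hH : H = {h : EuclideanSpace ℝ (Fin k) | ∀ i : Fin k, 0 < w i h})
    (hC1 : ∀ i : Fin k, ContDiffOn ℝ 1 (w i) H) :
    (∀ h ∈ H, ∀ i j : Fin k, i ≠ j →
        fderiv ℝ (w i) h (EuclideanSpace.single j (1 : ℝ)) =
          fderiv ℝ (w j) h (EuclideanSpace.single i (1 : ℝ))) ∧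
      ∃ A : EuclideanSpace ℝ (Fin k) → ℝ, ∀ h ∈ H,
        HasGradientAt A (WithLp.toLp 2 (fun i => w i h) : EuclideanSpace ℝ (Fin k)) h :=
  cell_measure_mixed_partials_symmetric_general n k hk y hy Ω μ hac w hw H hH hC1
end
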